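/- With ∂[ω₁ : ⋯ : ω_p] := Σ_{k=1}^{p} (−1)^{k−1} ω₁ ∧ ⋯ ∧ ω̂_k ∧ ⋯ ∧ ω_p, one has ∂[ω₁ : ⋯ : ω_p] = −(ω₁ − ω₂) ∧ ∂[ω₂ : ⋯ : ω_p] for all p ≥ 2 (where for p = 2, ∂[ω₂] is interpreted as 1, i.e. ∂[ω₁:ω₂] = ω₂ − ω₁). -/
import Mathlib


open ExteriorAlgebra

noncomputable def wedgeList (F : Type*) {W : Type*} [Field F] [AddCommGroup W] [Module F W]
    (l : List W) : ExteriorAlgebra F W := (l.map (ι F)).prod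

noncomputable def wedge (F : Type*) {W : Type*} [Field F] [AddCommGroup W] [Module F W]
    {p : ℕ} (ω : Fin p → W) : ExteriorAlgebra F W := wedgeList F (List.ofFn ω)

noncomputable def der (F : Type*) {W : Type*} [Field F] [AddCommGroup W] [Module F W]
    {p : ℕ} (ω : Fin p → W) : ExteriorAlgebra F W :=
  ∑ k : Fin p, (-1 : F) ^ (k : ℕ) • wedgeList F ((List.ofFn ω).eraseIdx k)

lemma wedgeList_cons (F : Type*) {W : Type*} [Field F] [AddCommGroup W] [Module F W]
    (a : W) (l : List W) : wedgeList F (a :: l) = ι F a * wedgeList F l := by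
  simp [wedgeList]

lemma ι_mul_der {F W : Type*} [Field F] [AddCommGroup W] [Module F W]
    {m : ℕ} (ω : Fin (m + 1) → W) :
    ι F (ω 0) * der F ω = wedge F ω := by
  have h2 : ∀ j : Fin m,
      (List.ofFn ω).eraseIdx ((j : ℕ) + 1) = ω 0 :: (List.ofFn (Fin.tail ω)).eraseIdx j := by
    intro j; rw [List.ofFn_succ]; rfl
  have h1 : (List.ofFn ω).eraseIdx 0 = List.ofFn (Fin.tail ω) := by
    rw [List.ofFn_succ]; rfl
  rw [der, Finset.mul_sum]
  simp only [mul_smul_comm]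
  rw [Fin.sum_univ_succ]
  simp only [Fin.val_zero, pow_zero, one_smul, Fin.val_succ, h1, h2, wedgeList_cons,
    ← mul_assoc, ι_sq_zero, zero_mul, smul_zero, Finset.sum_const_zero, add_zero]
  rw [wedge, List.ofFn_succ, wedgeList_cons]
  rfl

lemma der_split {F W : Type*} [Field F] [AddCommGroup W] [Module F W]
    {n : ℕ} (ω : Fin (n + 2) → W) :
    der F ω = wedge F (Fin.tail ω) - ι F (ω 0) * der F (Fin.tail ω) := by
  have h2 : ∀ j : Fin (n + 1),
      (List.ofFn ω).eraseIdx ((j : ℕ) + 1) = ω 0 :: (List.ofFn (Fin.tail ω)).eraseIdx j := by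
    intro j; rw [List.ofFn_succ]; rfl
  have h1 : (List.ofFn ω).eraseIdx 0 = List.ofFn (Fin.tail ω) := by
    rw [List.ofFn_succ]; rfl
  rw [der, Fin.sum_univ_succ]
  simp only [Fin.val_zero, pow_zero, one_smul, Fin.val_succ, h1, h2, wedgeList_cons]
  have hsum : ∑ x : Fin (n + 1), (-1 : F) ^ ((x : ℕ) + 1) •
      (ι F (ω 0) * wedgeList F ((List.ofFn (Fin.tail ω)).eraseIdx x)) =
      -(ι F (ω 0) * der F (Fin.tail ω)) := by
    rw [der, Finset.mul_sum, ← Finset.sum_neg_distrib]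
    refine Finset.sum_congr rfl fun j _ => ?_
    rw [pow_succ, mul_comm ((-1 : F) ^ (j : ℕ)), neg_one_mul, neg_smul, mul_smul_comm]
  rw [hsum, sub_eq_add_neg]
  rfl

/-- `∂[ω₁:⋯:ω_p] = −(ω₁ − ω₂) ∧ ∂[ω₂:⋯:ω_p]` for `p ≥ 2` (here `p = n + 2`);
for `p = 2` the factor `∂[ω₂]` is the empty product `1`. -/
theorem der_eq_neg_diff_mul {F W : Type*} [Field F] [CharZero F] [AddCommGroup W] [Module F W]
    {n : ℕ} (ω : Fin (n + 2) → W) :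
    der F ω = -(ι F (ω 0 - ω 1) * der F (Fin.tail ω)) := by
  rw [der_split, map_sub, sub_mul, neg_sub]
  have : wedge F (Fin.tail ω) = ι F (ω 1) * der F (Fin.tail ω) := by
    rw [← ι_mul_der (Fin.tail ω)]; rfl
  rw [this]
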